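/- arXiv:1912.05403 — 2 statements merged into one kernel-verified Lean document; each statement's English description precedes it below -/
import Mathlib

section
/- If a symmetric bilinear form S on a subspace W satisfies c₊ a(v,v) ≤ S(v,v) ≤ c* a(v,v) for all v ∈ W with 0 < c₊ ≤ c*, where a is an inner product on W, then the bilinear form b(u,v) = a(Pu, Pv) + S((I−Q)u, (I−Q)v) — with P, Q projections such that ker Q ⊆ W and a(v,v) ≤ C₁ a(Pv,Pv) + C₂ a((I−Q)v,(I−Q)v) — is coercive with respect to a. -/
/-- Abstract VEM stabilization: if a symmetric bilinear form `S` on `W = ker Q`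
satisfies `c₊ a(v,v) ≤ S(v,v) ≤ c* a(v,v)` there, with `a` an inner product,
`Q` an `a`-orthogonal idempotent projector, then the discrete bilinear form
`b(u,v) = a(Qu, Qv) + S((I-Q)u, (I-Q)v)` is coercive:
`b(v,v) ≥ min(1, c₊) a(v,v)` for all `v`. -/
theorem stmt_8 (V : Type*) [AddCommGroup V] [Module ℝ V]
    (a : V →ₗ[ℝ] V →ₗ[ℝ] ℝ)
    (hasym : ∀ u v : V, a u v = a v u)
    (hapsd : ∀ v : V, 0 ≤ a v v)
    (hadef : ∀ v : V, a v v = 0 → v = 0)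
    (Q : V →ₗ[ℝ] V) (hQ : Q ∘ₗ Q = Q)
    (horth : ∀ v : V, a (v - Q v) (Q v) = 0)
    (S : V → V → ℝ)
    (hSsym : ∀ u v : V, u ∈ LinearMap.ker Q → v ∈ LinearMap.ker Q → S u v = S v u)
    (cp cs : ℝ) (hcp : 0 < cp) (hcs : cp ≤ cs)
    (hS : ∀ v ∈ LinearMap.ker Q, cp * a v v ≤ S v v ∧ S v v ≤ cs * a v v) :
    ∀ v : V, min 1 cp * a v v ≤ a (Q v) (Q v) + S (v - Q v) (v - Q v) := by
  intro v
  have hQQ : Q (Q v) = Q v := LinearMap.congr_fun hQ v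
  have hker : v - Q v ∈ LinearMap.ker Q := by
    simp [LinearMap.mem_ker, map_sub, hQQ]
  have hsplit : a v v = a (Q v) (Q v) + a (v - Q v) (v - Q v) := by
    have h1 := horth v
    have h2 : a (Q v) (v - Q v) = 0 := by rw [hasym]; exact h1
    have h3 : a v v = a ((v - Q v) + Q v) ((v - Q v) + Q v) := by
      rw [sub_add_cancel]
    simp only [map_add, LinearMap.add_apply, h1, h2] at h3
    linarith
  have hSv := (hS _ hker).1
  have hb1 : min 1 cp * a (Q v) (Q v) ≤ 1 * a (Q v) (Q v) :=
    mul_le_mul_of_nonneg_right (min_le_left _ _) (hapsd _)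
  have hb2 : min 1 cp * a (v - Q v) (v - Q v) ≤ cp * a (v - Q v) (v - Q v) :=
    mul_le_mul_of_nonneg_right (min_le_right _ _) (hapsd _)
  have h4 : min 1 cp * a v v
      = min 1 cp * a (Q v) (Q v) + min 1 cp * a (v - Q v) (v - Q v) := by
    rw [hsplit]; ring
  linarith
end

section
/- In the Dörfler-type marking algorithm, if the cell estimators are sorted in non-increasing order and cells are marked greedily until the cumulative marked estimator exceeds C times the total, then the number of marked cells is minimal among all subsets M of cells with Σ_{E∈M} est_E² ≥ C·Σ_E est_E². -/
/-! In a list sorted non-increasingly by `e`, the first `k` entries carry the largest `e`-sum among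
any `k` distinct entries. So if `M` has the Dörfler property, so does the greedy prefix of length
`#M`, and minimality of the greedy length `i` gives `i ≤ #M`. -/

section SortedPrefix

variable {ι α : Type*} [AddCommMonoid α] [LinearOrder α] [IsOrderedAddMonoid α] {e : ι → α}

theorem List.sum_map_take_le_sum_map_take_cons {a : ι} {t : List ι}
    (hs : (a :: t).Pairwise (fun x y => e y ≤ e x)) {n : ℕ} (hn : n ≤ t.length) :
    ((t.take n).map e).sum ≤ (((a :: t).take n).map e).sum := by
  induction t generalizing a n with
  | nil => simp_all
  | cons b t ih =>
    cases n with
    | zero => simp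
    | succ m =>
      have hba : e b ≤ e a := (List.pairwise_cons.1 hs).1 b List.mem_cons_self
      have htail : ((t.take m).map e).sum ≤ (((b :: t).take m).map e).sum :=
        ih (List.pairwise_cons.1 hs).2 (by simpa using hn)
      simpa using add_le_add hba htail

theorem Finset.sum_le_sum_map_take_card {l : List ι} (hs : l.Pairwise (fun x y => e y ≤ e x))
    {M : Finset ι} (hM : ∀ x ∈ M, x ∈ l) : ∑ x ∈ M, e x ≤ ((l.take M.card).map e).sum := by
  classical
  induction l generalizing M with
  | nil =>
    obtain rfl : M = ∅ := Finset.eq_empty_of_forall_notMem fun x hx => by simpa using hM x hx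
    simp
  | cons a t ih =>
    have hst := (List.pairwise_cons.1 hs).2
    by_cases haM : a ∈ M
    · have hrest : ∀ x ∈ M.erase a, x ∈ t := fun x hx =>
        (List.mem_cons.1 (hM x (Finset.mem_of_mem_erase hx))).resolve_left (Finset.ne_of_mem_erase hx)
      rw [← Finset.add_sum_erase M e haM, ← Finset.card_erase_add_one haM]
      simpa using add_le_add_right (ih hst hrest) (e a)
    · have hMt : ∀ x ∈ M, x ∈ t := fun x hx =>
        (List.mem_cons.1 (hM x hx)).resolve_left fun h => haM (h ▸ hx)
      have hcard : M.card ≤ t.length :=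
        (Finset.card_le_card fun x hx => List.mem_toFinset.2 (hMt x hx)).trans
          (List.toFinset_card_le t)
      exact (ih hst hMt).trans (List.sum_map_take_le_sum_map_take_cons hs hcard)

end SortedPrefix

theorem stmt_15_general {ι : Type*} (T : Finset ι) (e : ι → ℝ)
    (C : ℝ)
    (l : List ι) (hmem : ∀ x, x ∈ l ↔ x ∈ T)
    (hsort : l.Pairwise (fun E E' => e E' ≤ e E))
    (i : ℕ)
    (himin : ∀ j : ℕ, C * ∑ E ∈ T, e E ≤ ((l.take j).map e).sum → i ≤ j) :
    ∀ M ⊆ T, C * ∑ E ∈ T, e E ≤ ∑ E ∈ M, e E → i ≤ M.card := fun M hMT hM =>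
  himin M.card (hM.trans (Finset.sum_le_sum_map_take_card hsort fun x hx => (hmem x).2 (hMT hx)))

/-- Dörfler-type marking: if the cell estimators are sorted in non-increasing
order and cells are marked greedily until the cumulative marked estimator
reaches `C` times the total, the number of marked cells is minimal among all
subsets satisfying the Dörfler property `Σ_{E∈M} est_E² ≥ C·Σ_E est_E²`. -/
theorem stmt_15 {ι : Type*} [DecidableEq ι] (T : Finset ι) (e : ι → ℝ)
    (he : ∀ E ∈ T, 0 ≤ e E) (htot : 0 < ∑ E ∈ T, e E)
    (C : ℝ) (hC0 : 0 < C) (hC1 : C < 1)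
    (l : List ι) (hnd : l.Nodup) (hmem : ∀ x, x ∈ l ↔ x ∈ T)
    (hsort : l.Pairwise (fun E E' => e E' ≤ e E))
    (i : ℕ)
    (hi : C * ∑ E ∈ T, e E ≤ ((l.take i).map e).sum)
    (himin : ∀ j : ℕ, C * ∑ E ∈ T, e E ≤ ((l.take j).map e).sum → i ≤ j) :
    ∀ M ⊆ T, C * ∑ E ∈ T, e E ≤ ∑ E ∈ M, e E → i ≤ M.card :=
  stmt_15_general T e C l hmem hsort i himin
end
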